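/- Let I, J ⊆ ℝ be open intervals, let α : I → ℝ^{2,1} and β : J → ℝ^{2,1} be smooth null curves, let ρ : I × J → (0,∞) be smooth, and let N : I × J → ℝ^{2,1} be smooth such that for all (u,v) ∈ I × J: ⟨α′(u), β′(v)⟩ = 2ρ(u,v)², ⟨N, N⟩ = 1, ⟨N(u,v), α′(u)⟩ = 0, ⟨N(u,v), β′(v)⟩ = 0, α″(u) = 2(ρ_u/ρ)·α′(u) − N(u,v), and β″(v) = 2(ρ_v/ρ)·β′(v) − N(u,v). Then the following are equivalent: (i) ρ_uu − ρ_vv vanishes identically on I × J (the planar curvature line condition for the surface F = (α + β)/2); (ii) there exists a constant k ∈ ℝ such that ⟨α‴(u), α‴(u)⟩ = k for all u ∈ I and ⟨β‴(v), β‴(v)⟩ = k for all v ∈ J, i.e. the generating null curves α and β have the same constant lightlike curvature. -/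

import Mathlib

noncomputable section

/-- Minkowski inner product on ℝ^{2,1} = ℝ³, coordinates (ξ₁, ξ₂, ξ₀). -/
def mink (a b : ℝ × ℝ × ℝ) : ℝ := a.1 * b.1 + a.2.1 * b.2.1 - a.2.2 * b.2.2

lemma mink_symm (a b : ℝ × ℝ × ℝ) : mink a b = mink b a := by simp [mink]; ring

lemma mink_add_left (a b c : ℝ × ℝ × ℝ) : mink (a + b) c = mink a c + mink b c := by
  simp [mink]; ring

lemma mink_sub_left (a b c : ℝ × ℝ × ℝ) : mink (a - b) c = mink a c - mink b c := by
  simp [mink]; ring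

lemma mink_smul_left (s : ℝ) (a c : ℝ × ℝ × ℝ) : mink (s • a) c = s * mink a c := by
  simp [mink]; ring

lemma mink_add_right (a b c : ℝ × ℝ × ℝ) : mink a (b + c) = mink a b + mink a c := by
  simp [mink]; ring

lemma mink_sub_right (a b c : ℝ × ℝ × ℝ) : mink a (b - c) = mink a b - mink a c := by
  simp [mink]; ring

lemma mink_smul_right (s : ℝ) (a c : ℝ × ℝ × ℝ) : mink a (s • c) = s * mink a c := by
  simp [mink]; ring

lemma hasDerivAt_mink {f g : ℝ → ℝ × ℝ × ℝ} {f' g' : ℝ × ℝ × ℝ} {x : ℝ}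
    (hf : HasDerivAt f f' x) (hg : HasDerivAt g g' x) :
    HasDerivAt (fun t => mink (f t) (g t)) (mink f' (g x) + mink (f x) g') x := by
  have hf1 : HasDerivAt (fun t => (f t).1) f'.1 x := by
    simpa using (hf.hasFDerivAt.fst).hasDerivAt
  have hf2 : HasDerivAt (fun t => (f t).2.1) f'.2.1 x := by
    simpa using ((hf.hasFDerivAt.snd).fst).hasDerivAt
  have hf3 : HasDerivAt (fun t => (f t).2.2) f'.2.2 x := by
    simpa using ((hf.hasFDerivAt.snd).snd).hasDerivAt
  have hg1 : HasDerivAt (fun t => (g t).1) g'.1 x := by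
    simpa using (hg.hasFDerivAt.fst).hasDerivAt
  have hg2 : HasDerivAt (fun t => (g t).2.1) g'.2.1 x := by
    simpa using ((hg.hasFDerivAt.snd).fst).hasDerivAt
  have hg3 : HasDerivAt (fun t => (g t).2.2) g'.2.2 x := by
    simpa using ((hg.hasFDerivAt.snd).snd).hasDerivAt
  have h := ((hf1.mul hg1).add (hf2.mul hg2)).sub (hf3.mul hg3)
  refine h.congr_deriv ?_
  simp only [mink]; ring

/-- A vector Minkowski-orthogonal to the frame {a, b, n} vanishes. -/
lemma mink_perp_eq_zero (a b n x : ℝ × ℝ × ℝ) (r : ℝ) (hr : r ≠ 0)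
    (haa : mink a a = 0) (hbb : mink b b = 0) (hab : mink a b = 2 * r ^ 2)
    (hnn : mink n n = 1) (hna : mink n a = 0) (hnb : mink n b = 0)
    (hxa : mink x a = 0) (hxb : mink x b = 0) (hxn : mink x n = 0) : x = 0 := by
  obtain ⟨a1, a2, a0⟩ := a
  obtain ⟨b1, b2, b0⟩ := b
  obtain ⟨n1, n2, n0⟩ := n
  obtain ⟨x1, x2, x0⟩ := x
  simp only [mink] at *
  set d : ℝ := a1 * (b2 * n0 - b0 * n2) - a2 * (b1 * n0 - b0 * n1) + a0 * (b1 * n2 - b2 * n1)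
    with hd
  have hd2 : d ^ 2 = 4 * r ^ 4 := by
    have expand : d ^ 2 =
        -((a1 * a1 + a2 * a2 - a0 * a0) *
            ((b1 * b1 + b2 * b2 - b0 * b0) * (n1 * n1 + n2 * n2 - n0 * n0)
              - (b1 * n1 + b2 * n2 - b0 * n0) ^ 2)
          - (a1 * b1 + a2 * b2 - a0 * b0) *
            ((a1 * b1 + a2 * b2 - a0 * b0) * (n1 * n1 + n2 * n2 - n0 * n0)
              - (b1 * n1 + b2 * n2 - b0 * n0) * (a1 * n1 + a2 * n2 - a0 * n0))
          + (a1 * n1 + a2 * n2 - a0 * n0) *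
            ((a1 * b1 + a2 * b2 - a0 * b0) * (b1 * n1 + b2 * n2 - b0 * n0)
              - (b1 * b1 + b2 * b2 - b0 * b0) * (a1 * n1 + a2 * n2 - a0 * n0))) := by
      rw [hd]; ring
    have hna' : a1 * n1 + a2 * n2 - a0 * n0 = 0 := by linarith [hna]
    have hnb' : b1 * n1 + b2 * n2 - b0 * n0 = 0 := by linarith [hnb]
    rw [expand, haa, hab, hnn, hna', hnb']
    ring
  have hdne : d ≠ 0 := by
    intro h0
    rw [h0] at hd2
    have h4 : 0 < r ^ 4 := by positivity
    linarith
  have e1 : d * x1 = 0 := by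
    linear_combination (-(b2 * (-n0) - (-b0) * n2)) * hxa + (a2 * (-n0) - (-a0) * n2) * hxb
      - (a2 * (-b0) - (-a0) * b2) * hxn
  have e2 : d * x2 = 0 := by
    linear_combination (b1 * (-n0) - (-b0) * n1) * hxa - (a1 * (-n0) - (-a0) * n1) * hxb
      + (a1 * (-b0) - (-a0) * b1) * hxn
  have e3 : d * x0 = 0 := by
    linear_combination (-(b1 * n2 - b2 * n1)) * hxa + (a1 * n2 - a2 * n1) * hxb
      - (a1 * b2 - a2 * b1) * hxn
  have hx1 : x1 = 0 := by
    rcases mul_eq_zero.1 e1 with h | h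
    · exact absurd h hdne
    · exact h
  have hx2 : x2 = 0 := by
    rcases mul_eq_zero.1 e2 with h | h
    · exact absurd h hdne
    · exact h
  have hx0 : x0 = 0 := by
    rcases mul_eq_zero.1 e3 with h | h
    · exact absurd h hdne
    · exact h
  simp [hx1, hx2, hx0, Prod.ext_iff]
/-- Partial derivative in the first (u) variable. -/
def pdx {E : Type*} [NormedAddCommGroup E] [NormedSpace ℝ E]
    (f : ℝ × ℝ → E) (p : ℝ × ℝ) : E :=
  deriv (fun t => f (t, p.2)) p.1

/-- Partial derivative in the second (v) variable. -/
def pdy {E : Type*} [NormedAddCommGroup E] [NormedSpace ℝ E]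
    (f : ℝ × ℝ → E) (p : ℝ × ℝ) : E :=
  deriv (fun t => f (p.1, t)) p.2

/-- The lightlike curvature of the generating curve: ⟨α''', α'''⟩ = -4 r'' / r. -/
lemma lightlike_curvature_eq (I : Set ℝ) (hI : IsOpen I) {u : ℝ} (hu : u ∈ I)
    (α : ℝ → ℝ × ℝ × ℝ) (b : ℝ × ℝ × ℝ) (r : ℝ → ℝ) (n : ℝ → ℝ × ℝ × ℝ)
    (hα : ContDiffOn ℝ (⊤ : ℕ∞) α I) (hr : ContDiffOn ℝ (⊤ : ℕ∞) r I) (hn : ContDiffOn ℝ (⊤ : ℕ∞) n I)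
    (hrpos : ∀ t ∈ I, 0 < r t)
    (haa : ∀ t ∈ I, mink (deriv α t) (deriv α t) = 0)
    (hbb : mink b b = 0)
    (hab : ∀ t ∈ I, mink (deriv α t) b = 2 * r t ^ 2)
    (hnn : ∀ t ∈ I, mink (n t) (n t) = 1)
    (hna : ∀ t ∈ I, mink (n t) (deriv α t) = 0)
    (hnb : ∀ t ∈ I, mink (n t) b = 0)
    (heq : ∀ t ∈ I, deriv (deriv α) t
        = (2 * (deriv r t / r t)) • deriv α t - n t) :
    mink (deriv (deriv (deriv α)) u) (deriv (deriv (deriv α)) u)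
      = -4 * deriv (deriv r) u / r u := by
  have memU : I ∈ nhds u := hI.mem_nhds hu
  have hru : r u ≠ 0 := (hrpos u hu).ne'
  have hα1 : ContDiffOn ℝ (⊤ : ℕ∞) (deriv α) I := hα.deriv_of_isOpen hI (by simp)
  have hr1 : ContDiffOn ℝ (⊤ : ℕ∞) (deriv r) I := hr.deriv_of_isOpen hI (by simp)
  have hαd : HasDerivAt (deriv α) (deriv (deriv α) u) u :=
    (((hα1.differentiableOn (by simp)).differentiableAt memU)).hasDerivAt
  have hrd : HasDerivAt r (deriv r u) u :=
    (((hr.differentiableOn (by simp)).differentiableAt memU)).hasDerivAt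
  have hr1d : HasDerivAt (deriv r) (deriv (deriv r) u) u :=
    (((hr1.differentiableOn (by simp)).differentiableAt memU)).hasDerivAt
  have hnd : HasDerivAt n (deriv n u) u :=
    (((hn.differentiableOn (by simp)).differentiableAt memU)).hasDerivAt
  set A : ℝ × ℝ × ℝ := deriv α u with hA
  set A2 : ℝ × ℝ × ℝ := deriv (deriv α) u with hA2
  set nu : ℝ × ℝ × ℝ := deriv n u with hnu
  set c : ℝ := 2 * (deriv r u / r u) with hc
  set c' : ℝ := 2 * ((deriv (deriv r) u * r u - deriv r u * deriv r u) / r u ^ 2) with hc'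
  have hcd : HasDerivAt (fun t => 2 * (deriv r t / r t)) c' u := by
    have h1 := hr1d.div hrd hru
    exact h1.const_mul 2
  have hRHS : HasDerivAt (fun t => (2 * (deriv r t / r t)) • deriv α t - n t)
      (c • A2 + c' • A - nu) u := (hcd.smul hαd).sub hnd
  have hEq3 : deriv (deriv (deriv α)) u = c • A2 + c' • A - nu := by
    have hcongr : HasDerivAt (deriv (deriv α)) (c • A2 + c' • A - nu) u :=
      hRHS.congr_of_eventuallyEq (Filter.eventuallyEq_of_mem memU heq)
    exact hcongr.deriv
  have hA2eq : A2 = c • A - n u := heq u hu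
  have hnnu : mink (n u) nu = 0 := by
    have h1 : HasDerivAt (fun t => mink (n t) (n t)) (mink nu (n u) + mink (n u) nu) u :=
      hasDerivAt_mink hnd hnd
    have h2 : HasDerivAt (fun t => mink (n t) (n t)) 0 u :=
      (hasDerivAt_const u (1 : ℝ)).congr_of_eventuallyEq (Filter.eventuallyEq_of_mem memU hnn)
    have h3 := h1.unique h2
    have h4 := mink_symm nu (n u)
    linarith
  have hnub : mink nu b = 0 := by
    have h1 : HasDerivAt (fun t => mink (n t) b) (mink nu b + mink (n u) 0) u :=
      hasDerivAt_mink hnd (hasDerivAt_const u b)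
    have h2 : HasDerivAt (fun t => mink (n t) b) 0 u :=
      (hasDerivAt_const u (0 : ℝ)).congr_of_eventuallyEq (Filter.eventuallyEq_of_mem memU hnb)
    have h3 := h1.unique h2
    have h0 : mink (n u) (0 : ℝ × ℝ × ℝ) = 0 := by simp [mink]
    linarith
  have hnuA : mink nu A = 1 := by
    have h1 : HasDerivAt (fun t => mink (n t) (deriv α t)) (mink nu A + mink (n u) A2) u :=
      hasDerivAt_mink hnd hαd
    have h2 : HasDerivAt (fun t => mink (n t) (deriv α t)) 0 u :=
      (hasDerivAt_const u (0 : ℝ)).congr_of_eventuallyEq (Filter.eventuallyEq_of_mem memU hna)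
    have h3 := h1.unique h2
    have h4 : mink (n u) A2 = -1 := by
      rw [hA2eq, mink_sub_right, mink_smul_right, hna u hu, hnn u hu]; ring
    linarith
  have hnueq : nu = (1 / (2 * r u ^ 2)) • b := by
    have hx := mink_perp_eq_zero A b (n u) (nu - (1 / (2 * r u ^ 2)) • b) (r u) hru
      (haa u hu) hbb (hab u hu) (hnn u hu) (hna u hu) (hnb u hu)
      (by rw [mink_sub_left, mink_smul_left]
          have hba : mink b A = 2 * r u ^ 2 := by rw [mink_symm]; exact hab u hu
          rw [hba, hnuA]; field_simp; norm_num)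
      (by rw [mink_sub_left, mink_smul_left, hnub, hbb]; ring)
      (by rw [mink_sub_left, mink_smul_left]
          have h1 : mink nu (n u) = 0 := by rw [mink_symm]; exact hnnu
          have h2 : mink b (n u) = 0 := by rw [mink_symm]; exact hnb u hu
          rw [h1, h2]; ring)
    exact sub_eq_zero.mp hx
  have hnunu : mink nu nu = 0 := by
    rw [hnueq, mink_smul_left, mink_smul_right, hbb]; ring
  have hAA : mink A A = 0 := haa u hu
  have hAn : mink A (n u) = 0 := by rw [mink_symm]; exact hna u hu
  have hAnu : mink A nu = 1 := by rw [mink_symm]; exact hnuA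
  have hnA : mink (n u) A = 0 := hna u hu
  have hnn' : mink (n u) (n u) = 1 := hnn u hu
  have hnun : mink nu (n u) = 0 := by rw [mink_symm]; exact hnnu
  rw [hEq3, hA2eq]
  simp only [mink_add_left, mink_add_right, mink_sub_left, mink_sub_right,
    mink_smul_left, mink_smul_right]
  rw [hAA, hAn, hAnu, hnA, hnn', hnnu, hnuA, hnun, hnunu]
  rw [hc, hc']
  field_simp
  ring
/-- A timelike minimal surface F = (α + β)/2 has planar curvature lines
(ρ_uu − ρ_vv ≡ 0) if and only if its generating null curves α and β have the same
constant lightlike curvature. -/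
theorem planar_curvature_lines_iff_constant_lightlike_curvature
    (I J : Set ℝ) (hI : IsOpen I) (hJ : IsOpen J)
    (hIne : I.Nonempty) (hJne : J.Nonempty)
    (α β : ℝ → ℝ × ℝ × ℝ) (ρ : ℝ × ℝ → ℝ) (N : ℝ × ℝ → ℝ × ℝ × ℝ)
    (hα : ContDiffOn ℝ (⊤ : ℕ∞) α I) (hβ : ContDiffOn ℝ (⊤ : ℕ∞) β J)
    (hρ : ContDiffOn ℝ (⊤ : ℕ∞) ρ (I ×ˢ J)) (hN : ContDiffOn ℝ (⊤ : ℕ∞) N (I ×ˢ J))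
    (hρpos : ∀ p ∈ I ×ˢ J, 0 < ρ p)
    (hαnull : ∀ u ∈ I, mink (deriv α u) (deriv α u) = 0)
    (hβnull : ∀ v ∈ J, mink (deriv β v) (deriv β v) = 0)
    (hmetric : ∀ u ∈ I, ∀ v ∈ J, mink (deriv α u) (deriv β v) = 2 * (ρ (u, v)) ^ 2)
    (hNN : ∀ p ∈ I ×ˢ J, mink (N p) (N p) = 1)
    (hNα : ∀ u ∈ I, ∀ v ∈ J, mink (N (u, v)) (deriv α u) = 0)
    (hNβ : ∀ u ∈ I, ∀ v ∈ J, mink (N (u, v)) (deriv β v) = 0)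
    (hαeq : ∀ u ∈ I, ∀ v ∈ J,
      deriv (deriv α) u = (2 * (pdx ρ (u, v) / ρ (u, v))) • deriv α u - N (u, v))
    (hβeq : ∀ u ∈ I, ∀ v ∈ J,
      deriv (deriv β) v = (2 * (pdy ρ (u, v) / ρ (u, v))) • deriv β v - N (u, v)) :
    (∀ p ∈ I ×ˢ J, pdx (pdx ρ) p - pdy (pdy ρ) p = 0) ↔
    (∃ k : ℝ,
      (∀ u ∈ I, mink (deriv (deriv (deriv α)) u) (deriv (deriv (deriv α)) u) = k) ∧
      (∀ v ∈ J, mink (deriv (deriv (deriv β)) v) (deriv (deriv (deriv β)) v) = k)) := by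
  -- curvature of α
  have keyα : ∀ u ∈ I, ∀ v ∈ J,
      mink (deriv (deriv (deriv α)) u) (deriv (deriv (deriv α)) u)
        = -4 * pdx (pdx ρ) (u, v) / ρ (u, v) := by
    intro u hu v hv
    have hmaps : ∀ t ∈ I, (t, v) ∈ I ×ˢ J := fun t ht => Set.mk_mem_prod ht hv
    have hslice : ContDiff ℝ (⊤ : ℕ∞) (fun t : ℝ => (t, v)) := contDiff_id.prodMk contDiff_const
    have hr : ContDiffOn ℝ (⊤ : ℕ∞) (fun t => ρ (t, v)) I := hρ.comp hslice.contDiffOn hmaps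
    have hn : ContDiffOn ℝ (⊤ : ℕ∞) (fun t => N (t, v)) I := hN.comp hslice.contDiffOn hmaps
    have hkey := lightlike_curvature_eq I hI hu α (deriv β v) (fun t => ρ (t, v))
      (fun t => N (t, v)) hα hr hn
      (fun t ht => hρpos (t, v) (hmaps t ht))
      hαnull (hβnull v hv)
      (fun t ht => hmetric t ht v hv)
      (fun t ht => hNN (t, v) (hmaps t ht))
      (fun t ht => hNα t ht v hv)
      (fun t ht => hNβ t ht v hv)
      (fun t ht => hαeq t ht v hv)
    rw [hkey]
    rfl
  -- curvature of β
  have keyβ : ∀ u ∈ I, ∀ v ∈ J,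
      mink (deriv (deriv (deriv β)) v) (deriv (deriv (deriv β)) v)
        = -4 * pdy (pdy ρ) (u, v) / ρ (u, v) := by
    intro u hu v hv
    have hmaps : ∀ t ∈ J, (u, t) ∈ I ×ˢ J := fun t ht => Set.mk_mem_prod hu ht
    have hslice : ContDiff ℝ (⊤ : ℕ∞) (fun t : ℝ => (u, t)) := contDiff_const.prodMk contDiff_id
    have hr : ContDiffOn ℝ (⊤ : ℕ∞) (fun t => ρ (u, t)) J := hρ.comp hslice.contDiffOn hmaps
    have hn : ContDiffOn ℝ (⊤ : ℕ∞) (fun t => N (u, t)) J := hN.comp hslice.contDiffOn hmaps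
    have hkey := lightlike_curvature_eq J hJ hv β (deriv α u) (fun t => ρ (u, t))
      (fun t => N (u, t)) hβ hr hn
      (fun t ht => hρpos (u, t) (hmaps t ht))
      hβnull (hαnull u hu)
      (fun t ht => by rw [mink_symm]; exact hmetric u hu t ht)
      (fun t ht => hNN (u, t) (hmaps t ht))
      (fun t ht => hNβ u hu t ht)
      (fun t ht => hNα u hu t ht)
      (fun t ht => hβeq u hu t ht)
    rw [hkey]
    rfl
  have hstep : ∀ h : (∀ p ∈ I ×ˢ J, pdx (pdx ρ) p - pdy (pdy ρ) p = 0),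
      ∀ u ∈ I, ∀ v ∈ J,
      mink (deriv (deriv (deriv α)) u) (deriv (deriv (deriv α)) u)
        = mink (deriv (deriv (deriv β)) v) (deriv (deriv (deriv β)) v) := by
    intro h u hu v hv
    rw [keyα u hu v hv, keyβ u hu v hv]
    have h1 := h (u, v) (Set.mk_mem_prod hu hv)
    have h2 : pdx (pdx ρ) (u, v) = pdy (pdy ρ) (u, v) := by linarith
    rw [h2]
  constructor
  · intro h
    obtain ⟨u0, hu0⟩ := hIne
    obtain ⟨v0, hv0⟩ := hJne
    refine ⟨mink (deriv (deriv (deriv β)) v0) (deriv (deriv (deriv β)) v0),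
      fun u hu => hstep h u hu v0 hv0, fun v hv => ?_⟩
    rw [← hstep h u0 hu0 v hv, hstep h u0 hu0 v0 hv0]
  · rintro ⟨k, hk1, hk2⟩ p hp
    obtain ⟨hpu, hpv⟩ := hp
    have e1 := keyα p.1 hpu p.2 hpv
    have e2 := keyβ p.1 hpu p.2 hpv
    rw [hk1 p.1 hpu] at e1
    rw [hk2 p.2 hpv] at e2
    have hρne : ρ (p.1, p.2) ≠ 0 := (hρpos (p.1, p.2) (Set.mk_mem_prod hpu hpv)).ne'
    have : pdx (pdx ρ) (p.1, p.2) = pdy (pdy ρ) (p.1, p.2) := by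
      have h3 := e1.symm.trans e2
      rw [div_eq_div_iff hρne hρne] at h3
      have h4 := mul_right_cancel₀ hρne h3
      linarith
    have hp' : p = (p.1, p.2) := rfl
    rw [hp']
    linarith
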